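/- For κ > 0 and p ≥ 2, the function A_p(κ) = I_{p/2}(κ)/I_{p/2-1}(κ) is strictly concave, i.e., A_p''(κ) < 0. -/

import Mathlib

open Real

/-- Modified Bessel function of the first kind, `I_v(κ)`. -/
noncomputable def besselI (v κ : ℝ) : ℝ :=
  ∑' q : ℕ, (1 / (q.factorial * Real.Gamma (q + v + 1))) * (κ / 2) ^ ((2 * q : ℝ) + v)

/-- The Bessel ratio `A_p(κ) = I_{p/2}(κ) / I_{p/2-1}(κ)`. -/
noncomputable def Ap (p : ℕ) (κ : ℝ) : ℝ :=
  besselI (p / 2 : ℝ) κ / besselI ((p / 2 : ℝ) - 1) κ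

/-!
With `x = κ ^ 2 / 4` one has `I_ν(κ) = (κ / 2) ^ ν F_ν(x)` for an entire series `F_ν` with
`F_ν' = F_{ν+1}` and `F_{ν-1} = ν F_ν + x F_{ν+1}`. Hence `A = A_p` (`ν = p / 2`, `c = p - 1`)
solves the Riccati equation `A' = 1 - A ^ 2 - c A / κ`, and differentiating it once more gives
`-κ ^ 2 A'' = W := κ A' (c + 2 κ A) - c A`. Now `W > 0`: near `0`, `W ~ 3 κ ^ 3 / (4 ν ^ 2 (ν + 1))`
by the expansion `A = κ / (2 ν) - κ ^ 3 / (8 ν ^ 2 (ν + 1)) + …`, and at a first zero of `W` we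
would have `κ A' (c + 2 κ A) = c A > 0`, so `κ A' > 0` and `W' = κ A' (4 A + 2 κ A') > 0`, which is
impossible.
-/

open Filter Topology Set

lemma pos_of_deriv_pos_at_zeros {f : ℝ → ℝ} {a b : ℝ} (hf : ∀ x > a, DifferentiableAt ℝ f x)
    (hnear : ∀ᶠ x in 𝓝[>] a, 0 < f x) (hzero : ∀ x > a, f x = 0 → 0 < deriv f x) (hb : a < b) :
    0 < f b := by
  by_contra! hfb
  obtain ⟨d, hfd, hd⟩ := (hnear.and (Ioo_mem_nhdsGT hb)).exists
  set S := Icc d b ∩ f ⁻¹' Iic 0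
  have hS : IsClosed S := ContinuousOn.preimage_isClosed_of_isClosed
    (fun x hx ↦ (hf x (hd.1.trans_le hx.1)).continuousAt.continuousWithinAt) isClosed_Icc
    isClosed_Iic
  have hSbdd : BddBelow S := ⟨d, fun x hx ↦ hx.1.1⟩
  set z := sInf S
  have hzS : z ∈ S := hS.csInf_mem ⟨b, ⟨hd.2.le, le_rfl⟩, hfb⟩ hSbdd
  have hdz : d < z := hzS.1.1.lt_of_ne fun h ↦ hzS.2.not_gt (h ▸ hfd)
  have hleft : ∀ᶠ x in 𝓝[<] z, 0 < f x := by
    filter_upwards [Ioo_mem_nhdsLT hdz] with x hx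
    by_contra! h
    exact (csInf_le hSbdd ⟨⟨hx.1.le, hx.2.le.trans hzS.1.2⟩, h⟩).not_gt hx.2
  have hdiff := (hf z (hd.1.trans hdz)).hasDerivAt
  have hfz : f z = 0 := le_antisymm hzS.2 <| ge_of_tendsto
    (hdiff.continuousAt.tendsto.mono_left nhdsWithin_le_nhds) (hleft.mono fun _ h ↦ h.le)
  have hslope : deriv f z ≤ 0 := by
    refine le_of_tendsto ((hasDerivAt_iff_tendsto_slope.mp hdiff).mono_left (nhdsLT_le_nhdsNE z)) ?_
    filter_upwards [hleft, self_mem_nhdsWithin] with x hx hxz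
    rw [slope_def_field, hfz, sub_zero]
    exact div_nonpos_of_nonneg_of_nonpos hx.le (sub_nonpos.mpr (le_of_lt hxz))
  exact hslope.not_gt (hzero z (hd.1.trans hdz) hfz)

section Riccati

variable {A : ℝ → ℝ} {c t : ℝ}

/-- For a solution of `A' = 1 - A ^ 2 - c A / t` the first factor is `t A'(t)`. -/
noncomputable def riccatiDefect (A : ℝ → ℝ) (c t : ℝ) : ℝ :=
  (t - t * A t ^ 2 - c * A t) * (c + 2 * t * A t) - c * A t

lemma deriv_deriv_eq_neg_riccatiDefect
    (hA : ∀ s > 0, HasDerivAt A (1 - A s ^ 2 - c * A s / s) s) (ht : 0 < t) :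
    deriv (deriv A) t = -riccatiDefect A c t / t ^ 2 := by
  have hderiv : deriv A =ᶠ[𝓝 t] fun s ↦ 1 - A s ^ 2 - c * A s / s := by
    filter_upwards [Ioi_mem_nhds ht] with s hs using (hA s hs).deriv
  rw [hderiv.deriv_eq]
  refine ((((hasDerivAt_const t 1).sub ((hA t ht).pow 2)).sub
    (((hA t ht).const_mul c).div (hasDerivAt_id t) ht.ne')).deriv).trans ?_
  simp only [riccatiDefect, id]
  field_simp
  ring

lemma hasDerivAt_riccatiDefect
    (hA : ∀ s > 0, HasDerivAt A (1 - A s ^ 2 - c * A s / s) s) (ht : 0 < t) :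
    HasDerivAt (riccatiDefect A c)
      ((t - t * A t ^ 2 - c * A t) * (4 * A t + 2 * (t - t * A t ^ 2 - c * A t))
        - riccatiDefect A c t * (c + 2 * t * A t) / t) t := by
  have hA' := hA t ht
  have hu := ((hasDerivAt_id t).sub ((hasDerivAt_id t).mul (hA'.pow 2))).sub (hA'.const_mul c)
  have hv := (hasDerivAt_const t c).add (((hasDerivAt_id t).const_mul 2).mul hA')
  refine ((hu.mul hv).sub (hA'.const_mul c)).congr_deriv ?_
  simp only [riccatiDefect, id_eq, Pi.add_apply, Pi.sub_apply, Pi.mul_apply, Pi.pow_apply]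
  field_simp
  ring

lemma riccatiDefect_pos (hA : ∀ s > 0, HasDerivAt A (1 - A s ^ 2 - c * A s / s) s)
    (hc : 0 < c) (hA_pos : ∀ s > 0, 0 < A s) (hnear : ∀ᶠ s in 𝓝[>] 0, 0 < riccatiDefect A c s)
    (ht : 0 < t) : 0 < riccatiDefect A c t := by
  refine pos_of_deriv_pos_at_zeros (fun s hs ↦ (hasDerivAt_riccatiDefect hA hs).differentiableAt)
    hnear (fun s hs h0 ↦ ?_) ht
  rw [(hasDerivAt_riccatiDefect hA hs).deriv, h0, zero_mul, zero_div, sub_zero]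
  have hAs := hA_pos s hs
  have hu : 0 < s - s * A s ^ 2 - c * A s := by
    refine pos_of_mul_pos_left (b := c + 2 * s * A s) ?_ (by positivity)
    rw [riccatiDefect, sub_eq_zero] at h0
    rw [h0]
    positivity
  positivity

end Riccati

noncomputable def besselCoeff (ν : ℝ) (q : ℕ) : ℝ := 1 / (q.factorial * Gamma (q + ν + 1))

noncomputable def besselSeries (ν x : ℝ) : ℝ := ∑' q : ℕ, besselCoeff ν q * x ^ q

section besselSeries

variable {ν : ℝ}

lemma besselCoeff_pos (hν : -1 < ν) (q : ℕ) : 0 < besselCoeff ν q := by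
  have := Gamma_pos_of_pos (by linarith [q.cast_nonneg (α := ℝ)] : (0 : ℝ) < q + ν + 1)
  unfold besselCoeff
  positivity

lemma factorial_mul_Gamma_le_Gamma (hν : 0 ≤ ν) (q : ℕ) :
    q.factorial * Gamma (ν + 1) ≤ Gamma (q + ν + 1) := by
  induction q with
  | zero => simp
  | succ n ih =>
    rw [show ((n + 1 : ℕ) : ℝ) + ν + 1 = n + ν + 1 + 1 by push_cast; ring,
      Gamma_add_one (s := n + ν + 1) (by positivity), Nat.factorial_succ, Nat.cast_mul, mul_assoc]
    exact mul_le_mul (by push_cast; linarith) ih (by positivity) (by positivity)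

lemma besselCoeff_le (hν : 0 ≤ ν) (q : ℕ) :
    besselCoeff ν q ≤ 1 / (q.factorial * Gamma (ν + 1)) := by
  have hΓ := Gamma_pos_of_pos (by linarith : 0 < ν + 1)
  have hq : (1 : ℝ) ≤ q.factorial := by exact_mod_cast q.factorial_pos
  have hle := factorial_mul_Gamma_le_Gamma hν q
  refine one_div_le_one_div_of_le (by positivity) (hle.trans ?_)
  exact le_mul_of_one_le_left (hΓ.le.trans (hle.trans' (by nlinarith))) hq

lemma summable_besselCoeff_mul_pow (hν : 0 ≤ ν) (x : ℝ) :
    Summable fun q ↦ besselCoeff ν q * x ^ q := by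
  refine .of_norm_bounded ((Real.summable_pow_div_factorial |x|).div_const (Gamma (ν + 1)))
    fun q ↦ ?_
  rw [norm_mul, Real.norm_of_nonneg (besselCoeff_pos (by linarith) q).le, norm_pow,
    Real.norm_eq_abs, div_div, div_eq_mul_one_div, mul_comm]
  gcongr
  exact besselCoeff_le hν q

lemma succ_mul_besselCoeff_succ (ν : ℝ) (q : ℕ) :
    (q + 1) * besselCoeff ν (q + 1) = besselCoeff (ν + 1) q := by
  have hq : (q : ℝ) + 1 ≠ 0 := by positivity
  rw [besselCoeff, besselCoeff, Nat.factorial_succ, Nat.cast_mul, Nat.cast_succ,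
    show (q : ℝ) + 1 + ν + 1 = q + (ν + 1) + 1 by ring, mul_assoc, mul_one_div,
    div_mul_cancel_left₀ hq, one_div]

lemma besselCoeff_sub_one (hν : 0 < ν) (q : ℕ) :
    besselCoeff (ν - 1) q = (q + ν) * besselCoeff ν q := by
  have hq : (q : ℝ) + ν ≠ 0 := by positivity
  rw [besselCoeff, besselCoeff, show (q : ℝ) + (ν - 1) + 1 = q + ν by ring,
    Gamma_add_one hq, mul_one_div, mul_left_comm, div_mul_cancel_left₀ hq, one_div]

lemma hasSum_besselCoeff_mul_deriv_pow (hν : 0 ≤ ν) (x : ℝ) :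
    HasSum (fun q ↦ besselCoeff ν q * (q * x ^ (q - 1))) (besselSeries (ν + 1) x) := by
  rw [← hasSum_nat_add_iff' 1]
  simp only [Finset.range_one, Finset.sum_singleton, CharP.cast_eq_zero, zero_mul, mul_zero,
    sub_zero, Nat.add_sub_cancel, Nat.cast_succ]
  refine (summable_besselCoeff_mul_pow (ν := ν + 1) (by linarith) x).hasSum.congr_fun
    fun q ↦ ?_
  rw [← succ_mul_besselCoeff_succ]
  ring

lemma besselSeries_sub_one (hν : 0 < ν) (x : ℝ) :
    besselSeries (ν - 1) x = ν * besselSeries ν x + x * besselSeries (ν + 1) x := by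
  refine HasSum.tsum_eq <| (((summable_besselCoeff_mul_pow hν.le x).hasSum.mul_left ν).add
    ((hasSum_besselCoeff_mul_deriv_pow hν.le x).mul_left x)).congr_fun fun q ↦ ?_
  rw [besselCoeff_sub_one hν]
  rcases q with _ | q
  · simp
  · simp only [Nat.add_sub_cancel, pow_succ]
    push_cast
    ring

lemma besselSeries_pos (hν : 0 ≤ ν) {x : ℝ} (hx : 0 ≤ x) : 0 < besselSeries ν x :=
  (summable_besselCoeff_mul_pow hν x).tsum_pos
    (fun q ↦ mul_nonneg (besselCoeff_pos (by linarith) q).le (pow_nonneg hx q)) 0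
    (by simpa using besselCoeff_pos (by linarith) 0)

lemma besselSeries_zero (ν : ℝ) : besselSeries ν 0 = (Gamma (ν + 1))⁻¹ := by
  rw [besselSeries, tsum_eq_single 0 fun q hq ↦ by simp [zero_pow hq]]
  simp [besselCoeff]

lemma hasDerivAt_besselSeries (hν : 0 ≤ ν) (x : ℝ) :
    HasDerivAt (besselSeries ν) (besselSeries (ν + 1) x) x := by
  set r := |x| + 1
  have hx : x ∈ Metric.ball (0 : ℝ) r := by simp [r]
  rw [← (hasSum_besselCoeff_mul_deriv_pow hν x).tsum_eq]
  refine hasDerivAt_tsum_of_isPreconnected (hasSum_besselCoeff_mul_deriv_pow hν r).summable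
    Metric.isOpen_ball (convex_ball 0 r).isPreconnected
    (fun q y _ ↦ (hasDerivAt_pow q y).const_mul _) (fun q y hy ↦ ?_) hx
    (summable_besselCoeff_mul_pow hν x) hx
  have hyr : |y| ≤ r := by simpa using (Metric.mem_ball.mp hy).le
  have := (besselCoeff_pos (ν := ν) (by linarith) q).le
  rw [norm_mul, norm_mul, norm_pow, Real.norm_eq_abs, Real.norm_eq_abs, Real.norm_eq_abs,
    Nat.abs_cast, abs_of_nonneg this]
  gcongr

end besselSeries

noncomputable def besselRatio (ν κ : ℝ) : ℝ := besselI ν κ / besselI (ν - 1) κ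

section besselRatio

variable {ν t : ℝ}

lemma besselI_eq_rpow_mul_besselSeries (ν : ℝ) {κ : ℝ} (hκ : 0 < κ) :
    besselI ν κ = (κ / 2) ^ ν * besselSeries ν (κ ^ 2 / 4) := by
  rw [besselI, besselSeries, ← tsum_mul_left]
  congr 1 with q
  rw [rpow_add (by positivity), show (2 * q : ℝ) = ((2 * q : ℕ) : ℝ) by push_cast; ring,
    rpow_natCast, pow_mul, besselCoeff]
  ring

lemma besselRatio_eq (ν : ℝ) {κ : ℝ} (hκ : 0 < κ) :
    besselRatio ν κ = κ / 2 * besselSeries ν (κ ^ 2 / 4) / besselSeries (ν - 1) (κ ^ 2 / 4) := by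
  have h2 : 0 < κ / 2 := by positivity
  have := (rpow_pos_of_pos h2 ν).ne'
  rw [besselRatio, besselI_eq_rpow_mul_besselSeries ν hκ, besselI_eq_rpow_mul_besselSeries _ hκ,
    rpow_sub h2, rpow_one]
  field_simp

lemma besselRatio_pos (hν : 1 ≤ ν) (ht : 0 < t) : 0 < besselRatio ν t := by
  have := besselSeries_pos (by linarith) (by positivity : 0 ≤ t ^ 2 / 4) (ν := ν)
  have := besselSeries_pos (by linarith) (by positivity : 0 ≤ t ^ 2 / 4) (ν := ν - 1)
  rw [besselRatio_eq ν ht]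
  positivity

lemma hasDerivAt_besselRatio (hν : 1 ≤ ν) (ht : 0 < t) :
    HasDerivAt (besselRatio ν) (1 - besselRatio ν t ^ 2 - (2 * ν - 1) * besselRatio ν t / t) t := by
  have hsq : HasDerivAt (fun s ↦ s ^ 2 / 4) (t / 2) t := by
    refine ((hasDerivAt_pow 2 t).div_const 4).congr_deriv ?_
    norm_num
    ring
  have hnum := ((hasDerivAt_id t).div_const 2).mul
    ((hasDerivAt_besselSeries (ν := ν) (by linarith) (t ^ 2 / 4)).comp t hsq)
  have hden := (hasDerivAt_besselSeries (ν := ν - 1) (by linarith) (t ^ 2 / 4)).comp t hsq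
  rw [sub_add_cancel] at hden
  have ha := besselSeries_pos (by linarith) (by positivity : 0 ≤ t ^ 2 / 4) (ν := ν - 1)
  refine ((hnum.div hden ha.ne').congr_of_eventuallyEq ?_).congr_deriv ?_
  · filter_upwards [Ioi_mem_nhds ht] with s hs using besselRatio_eq ν hs
  · simp only [id_eq, Function.comp_apply, Pi.mul_apply]
    rw [besselRatio_eq ν ht, besselSeries_sub_one (by linarith)]
    rw [besselSeries_sub_one (by linarith)] at ha
    generalize besselSeries ν (t ^ 2 / 4) = b, besselSeries (ν + 1) (t ^ 2 / 4) = d at ha ⊢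
    generalize hD : ν * b + t ^ 2 / 4 * d = D at ha ⊢
    have := ha.ne'
    field_simp
    rw [← hD]
    ring

end besselRatio

section nearZero

variable {ν : ℝ}

lemma besselSeries_div_besselSeries_sub_one_zero (hν : 0 < ν) :
    besselSeries ν 0 / besselSeries (ν - 1) 0 = ν⁻¹ := by
  have := (Gamma_pos_of_pos hν).ne'
  rw [besselSeries_zero, besselSeries_zero, sub_add_cancel, Gamma_add_one hν.ne']
  field_simp

lemma hasDerivAt_besselSeries_div_besselSeries_sub_one_zero (hν : 1 ≤ ν) :
    HasDerivAt (fun x ↦ besselSeries ν x / besselSeries (ν - 1) x) (-1 / (ν ^ 2 * (ν + 1))) 0 := by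
  have hden := hasDerivAt_besselSeries (ν := ν - 1) (by linarith) 0
  rw [sub_add_cancel] at hden
  have hΓ := (Gamma_pos_of_pos (by linarith : 0 < ν)).ne'
  refine ((hasDerivAt_besselSeries (by linarith) 0).div hden
    (besselSeries_pos (by linarith) le_rfl).ne').congr_deriv ?_
  rw [besselSeries_zero, besselSeries_zero, besselSeries_zero, sub_add_cancel,
    Gamma_add_one (by linarith : ν + 1 ≠ 0), Gamma_add_one (by linarith : ν ≠ 0)]
  field_simp
  ring

lemma tendsto_riccatiDefect_besselRatio_div_pow_three (hν : 1 ≤ ν) :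
    Tendsto (fun t ↦ riccatiDefect (besselRatio ν) (2 * ν - 1) t / t ^ 3) (𝓝[>] 0)
      (𝓝 (3 / (4 * ν ^ 2 * (ν + 1)))) := by
  set R := fun x ↦ besselSeries ν x / besselSeries (ν - 1) x
  have hR := hasDerivAt_besselSeries_div_besselSeries_sub_one_zero hν
  have hR0 : R 0 = ν⁻¹ := besselSeries_div_besselSeries_sub_one_zero (by linarith)
  have hx : Tendsto (fun t : ℝ ↦ t ^ 2 / 4) (𝓝[>] 0) (𝓝[>] 0) := by
    refine tendsto_nhdsWithin_of_tendsto_nhds_of_eventually_within _ ?_ ?_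
    · have := ((continuous_pow 2).div_const 4).tendsto (0 : ℝ)
      simp only [ne_eq, OfNat.ofNat_ne_zero, not_false_eq_true, zero_pow, zero_div] at this
      exact this.mono_left nhdsWithin_le_nhds
    · filter_upwards [self_mem_nhdsWithin] with t (ht : 0 < t)
      exact mem_Ioi.mpr (by positivity)
  have hslope : Tendsto (fun t ↦ (R (t ^ 2 / 4) - R 0) / (t ^ 2 / 4)) (𝓝[>] 0)
      (𝓝 (-1 / (ν ^ 2 * (ν + 1)))) := by
    simpa [Function.comp_def, slope_def_field] using
      (hasDerivAt_iff_tendsto_slope.mp hR).comp (hx.mono_right (nhdsGT_le_nhdsNE 0))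
  have hRx : Tendsto (fun t ↦ R (t ^ 2 / 4)) (𝓝[>] 0) (𝓝 ν⁻¹) :=
    hR0 ▸ hR.continuousAt.tendsto.comp (hx.mono_right nhdsWithin_le_nhds)
  have ht2 : Tendsto (fun t : ℝ ↦ t ^ 2) (𝓝[>] 0) (𝓝 0) := by
    simpa using ((continuous_pow 2).tendsto (0 : ℝ)).mono_left nhdsWithin_le_nhds
  -- with `x = t ^ 2 / 4` and `A = (t / 2) R x`, `W / t ^ 3` is
  -- `-(ν (2ν - 1) / 4) (R x - R 0) / x + R x - 3 (2ν - 1) (R x) ^ 2 / 4 - t ^ 2 (R x) ^ 3 / 4`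
  have hlim := (hslope.const_mul (-(ν * (2 * ν - 1) / 4))).add ((hRx.sub
    ((hRx.pow 2).const_mul (3 * (2 * ν - 1) / 4))).sub ((ht2.mul (hRx.pow 3)).div_const 4))
  convert hlim.congr' ?_ using 2
  · field_simp
    ring
  filter_upwards [self_mem_nhdsWithin] with t (ht : 0 < t)
  have ha := besselSeries_pos (by linarith) (by positivity : 0 ≤ t ^ 2 / 4) (ν := ν - 1)
  simp only [R, riccatiDefect, besselRatio_eq ν ht]
  rw [besselSeries_div_besselSeries_sub_one_zero (by linarith)]
  field_simp
  ring

end nearZero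

lemma riccatiDefect_besselRatio_pos {ν t : ℝ} (hν : 1 ≤ ν) (ht : 0 < t) :
    0 < riccatiDefect (besselRatio ν) (2 * ν - 1) t := by
  refine riccatiDefect_pos (fun s hs ↦ hasDerivAt_besselRatio hν hs) (by linarith)
    (fun s hs ↦ besselRatio_pos hν hs) ?_ ht
  filter_upwards [(tendsto_riccatiDefect_besselRatio_div_pow_three hν).eventually
    (eventually_gt_nhds (by positivity)), self_mem_nhdsWithin] with s hs (hs0 : 0 < s)
  exact (div_pos_iff_of_pos_right (pow_pos hs0 3)).mp hs

theorem stmt_10 (p : ℕ) (hp : 2 ≤ p) (κ : ℝ) (hκ : 0 < κ) :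
    deriv (deriv (Ap p)) κ < 0 := by
  have hν : 1 ≤ (p / 2 : ℝ) := by
    rw [le_div_iff₀ two_pos, one_mul]
    exact_mod_cast hp
  change deriv (deriv (besselRatio (p / 2))) κ < 0
  rw [deriv_deriv_eq_neg_riccatiDefect (fun s hs ↦ hasDerivAt_besselRatio hν hs) hκ]
  exact div_neg_of_neg_of_pos (neg_neg_of_pos (riccatiDefect_besselRatio_pos hν hκ))
    (by positivity)
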